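/- In the split graph G' constructed from a graph G (with A a clique, B independent, aᵢ ~ bⱼ iff i = j or vᵢvⱼ ∈ E(G)), any dominating set D' containing some bᵢ can be modified by replacing bᵢ with aᵢ (or removing bᵢ if aᵢ ∈ D') to obtain a dominating set that is no larger and contains no fewer vertices of A. Consequently, if G' has a dominating set of size k then it has a dominating set of size at most k contained entirely in A. -/

import Mathlib

def splitGraph {n : ℕ} (G : SimpleGraph (Fin n)) : SimpleGraph (Fin n ⊕ Fin n) where
  Adj u v :=
    match u, v with
    | .inl i, .inl j => i ≠ j
    | .inl i, .inr j => i = j ∨ G.Adj i j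
    | .inr i, .inl j => j = i ∨ G.Adj j i
    | .inr _, .inr _ => False
  symm := ⟨by
    rintro (i | i) (j | j) h <;> simp_all [ne_comm]⟩
  loopless := ⟨by
    rintro (i | i) h <;> simp_all [G.loopless.irrefl i]⟩

def IsDomSet {V : Type*} (G : SimpleGraph V) (D : Finset V) : Prop :=
  ∀ v, v ∉ D → ∃ d ∈ D, G.Adj d v

/-- The number of vertices of `D` lying on the clique side `A`. -/
def countA {n : ℕ} (D : Finset (Fin n ⊕ Fin n)) : ℕ :=
  (D.filter (fun u => ∃ i, u = Sum.inl i)).card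

/-!
Each vertex `bᵢ` of `B` is dominated by `aᵢ` in the strong sense that its closed neighbourhood
`N[bᵢ]` is contained in `N[aᵢ]`. Whenever every member of a dominating set is replaced by a vertex
whose closed neighbourhood contains its own, the result still dominates; so `bᵢ` may be traded for
`aᵢ`, and sending every `bᵢ` to `aᵢ` at once gives a dominating set inside `A` that is no larger.
-/

namespace SimpleGraph

variable {V : Type*} (H : SimpleGraph V)

def closedNbhd (v : V) : Set V := insert v (H.neighborSet v)

variable {H}

theorem mem_closedNbhd_iff {d v : V} : v ∈ H.closedNbhd d ↔ v = d ∨ H.Adj d v := Iff.rfl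

end SimpleGraph

open SimpleGraph

theorem IsDomSet.of_forall_closedNbhd_subset {V : Type*} {H : SimpleGraph V} {D D' : Finset V}
    (hD : IsDomSet H D) (h : ∀ d ∈ D, ∃ d' ∈ D', H.closedNbhd d ⊆ H.closedNbhd d') :
    IsDomSet H D' := by
  intro v hv
  obtain ⟨d, hdD, hvd⟩ : ∃ d ∈ D, v ∈ H.closedNbhd d := by
    by_cases hvD : v ∈ D
    · exact ⟨v, hvD, Set.mem_insert v _⟩
    · obtain ⟨d, hdD, hadj⟩ := hD v hvD
      exact ⟨d, hdD, Or.inr hadj⟩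
  obtain ⟨d', hd'D', hsub⟩ := h d hdD
  rcases mem_closedNbhd_iff.mp (hsub hvd) with rfl | hadj
  · exact absurd hd'D' hv
  · exact ⟨d', hd'D', hadj⟩

theorem Finset.card_insert_erase_le {α : Type*} [DecidableEq α] {s : Finset α} {b : α}
    (hb : b ∈ s) (a : α) : (insert a (s.erase b)).card ≤ s.card :=
  (card_insert_le a _).trans (card_erase_add_one hb).le

section SplitGraph

variable {n : ℕ} (G : SimpleGraph (Fin n))

theorem splitGraph_closedNbhd_inr_subset (i : Fin n) :
    (splitGraph G).closedNbhd (.inr i) ⊆ (splitGraph G).closedNbhd (.inl i) := by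
  rintro (j | j) hj
  · rcases hj with hj | (rfl | hji)
    · cases hj
    · exact Or.inl rfl
    · exact Or.inr (G.ne_of_adj hji).symm
  · rcases hj with hj | hj
    · cases hj
      exact Or.inr (Or.inl rfl)
    · cases hj

def toCliqueSide (u : Fin n ⊕ Fin n) : Fin n ⊕ Fin n := .inl (u.elim id id)

theorem splitGraph_closedNbhd_subset_toCliqueSide (u : Fin n ⊕ Fin n) :
    (splitGraph G).closedNbhd u ⊆ (splitGraph G).closedNbhd (toCliqueSide u) := by
  cases u with
  | inl i => exact subset_rfl
  | inr i => exact splitGraph_closedNbhd_inr_subset G i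

theorem IsDomSet.splitGraph_swap {D : Finset (Fin n ⊕ Fin n)} (hD : IsDomSet (splitGraph G) D)
    (i : Fin n) : IsDomSet (splitGraph G) (insert (.inl i) (D.erase (.inr i))) := by
  refine hD.of_forall_closedNbhd_subset fun d hd => ?_
  by_cases hdi : d = .inr i
  · exact ⟨.inl i, Finset.mem_insert_self _ _, hdi ▸ splitGraph_closedNbhd_inr_subset G i⟩
  · exact ⟨d, Finset.mem_insert_of_mem (Finset.mem_erase.mpr ⟨hdi, hd⟩), subset_rfl⟩

theorem IsDomSet.splitGraph_image_toCliqueSide {D : Finset (Fin n ⊕ Fin n)}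
    (hD : IsDomSet (splitGraph G) D) : IsDomSet (splitGraph G) (D.image toCliqueSide) :=
  hD.of_forall_closedNbhd_subset fun d hd =>
    ⟨toCliqueSide d, Finset.mem_image_of_mem _ hd, splitGraph_closedNbhd_subset_toCliqueSide G d⟩

end SplitGraph

theorem countA_le_countA_insert_inl_erase_inr {n : ℕ} (D : Finset (Fin n ⊕ Fin n)) (i : Fin n) :
    countA D ≤ countA (insert (.inl i) (D.erase (.inr i))) := by
  refine Finset.card_le_card fun u hu => ?_
  obtain ⟨huD, j, rfl⟩ := Finset.mem_filter.mp hu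
  exact Finset.mem_filter.mpr
    ⟨Finset.mem_insert_of_mem (Finset.mem_erase.mpr ⟨Sum.inl_ne_inr, huD⟩), j, rfl⟩

theorem stmt_8 {n : ℕ} (G : SimpleGraph (Fin n)) :
    (∀ D' : Finset (Fin n ⊕ Fin n), IsDomSet (splitGraph G) D' →
      ∀ i : Fin n, Sum.inr i ∈ D' →
        IsDomSet (splitGraph G) (insert (Sum.inl i) (D'.erase (Sum.inr i))) ∧
        (insert (Sum.inl i) (D'.erase (Sum.inr i))).card ≤ D'.card ∧
        countA D' ≤ countA (insert (Sum.inl i) (D'.erase (Sum.inr i)))) ∧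
    (∀ k : ℕ, ∀ D' : Finset (Fin n ⊕ Fin n),
      IsDomSet (splitGraph G) D' → D'.card = k →
      ∃ D : Finset (Fin n ⊕ Fin n), IsDomSet (splitGraph G) D ∧ D.card ≤ k ∧
        ∀ u ∈ D, ∃ i : Fin n, u = Sum.inl i) := by
  refine ⟨fun D' hD i hi => ⟨hD.splitGraph_swap G i, Finset.card_insert_erase_le hi _,
    countA_le_countA_insert_inl_erase_inr D' i⟩, ?_⟩
  rintro k D' hD rfl
  refine ⟨D'.image toCliqueSide, hD.splitGraph_image_toCliqueSide G, Finset.card_image_le, ?_⟩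
  simp only [Finset.mem_image, toCliqueSide]
  rintro _ ⟨u, -, rfl⟩
  exact ⟨_, rfl⟩
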